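/- arXiv:2605.00588 — 3 statements merged into one kernel-verified Lean document; each statement's English description precedes it below -/
import Mathlib

section
/- Let N ∈ ℕ, T ∈ ℕ, and for each agent i ∈ {1,…,N} let n_i ∈ ℕ, r_i ∈ ℝ^{n_i}, A_i ∈ ℝ^{T×n_i}, Π_i ∈ ℝ^{T×T}, and let p, y ∈ ℝ^T. Set d = Σ_i n_i, let Ω ⊆ ℝ^d be a nonempty closed convex set, and define the pseudo-gradient F(x; y) ∈ ℝ^d as the block vector whose i-th block is ∇_{x_i} J_i(x_i; y) = 2(x_i − r_i) + A_iᵀ Π_iᵀ (p + y), where J_i(x_i; y) = ‖x_i − r_i‖² + (p + y)ᵀ Π_i A_i x_i. Then the solution set SOL(F(·; y), Ω) of the variational inequality is a singleton, namely SOL(F(·; y), Ω) = { proj_Ω(a(y)) }, where a(y) ∈ ℝ^d is the block vector whose i-th block is r_i − (1/2) A_iᵀ Π_iᵀ (p + y); in particular, a(y) is an affine function of y. -/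
/-!
The pseudo-gradient is `F x = 2 • (x - a)`, so `x` solves the variational inequality exactly
when `⟪a - x, z - x⟫ ≤ 0` for all `z ∈ Ω`: the obtuse-angle characterization of the
projection of `a` onto `Ω`. Existence and uniqueness of that projection is the Hilbert
projection theorem for the nonempty closed convex set `Ω`.
-/

open Matrix
open scoped RealInnerProductSpace

/-- `x` is the Euclidean projection of `w` onto `C`: it belongs to `C` and minimizes
the distance to `w` among points of `C`. -/
def IsProjOn {E : Type*} [NormedAddCommGroup E] (C : Set E) (w x : E) : Prop :=
  x ∈ C ∧ ∀ z ∈ C, ‖w - x‖ ≤ ‖w - z‖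

section Projection

variable {E : Type*} [NormedAddCommGroup E] {C : Set E} {w x : E}

theorem isProjOn_iff_norm_eq_iInf (hx : x ∈ C) :
    IsProjOn C w x ↔ ‖w - x‖ = ⨅ z : C, ‖w - z‖ := by
  have hbdd : BddBelow (Set.range fun z : C => ‖w - z‖) :=
    ⟨0, by rintro _ ⟨z, rfl⟩; exact norm_nonneg _⟩
  refine ⟨fun ⟨_, hmin⟩ => ?_, fun h => ⟨hx, fun z hz => h ▸ ciInf_le hbdd ⟨z, hz⟩⟩⟩
  have : Nonempty C := ⟨⟨x, hx⟩⟩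
  exact le_antisymm (le_ciInf fun z => hmin z z.2) (ciInf_le hbdd ⟨x, hx⟩)

variable [InnerProductSpace ℝ E]

theorem isProjOn_iff_inner_le_zero (hC : Convex ℝ C) :
    IsProjOn C w x ↔ x ∈ C ∧ ∀ z ∈ C, ⟪w - x, z - x⟫ ≤ 0 :=
  ⟨fun h => ⟨h.1, (norm_eq_iInf_iff_real_inner_le_zero hC h.1).1
      ((isProjOn_iff_norm_eq_iInf h.1).1 h)⟩,
    fun ⟨hx, h⟩ => (isProjOn_iff_norm_eq_iInf hx).2
      ((norm_eq_iInf_iff_real_inner_le_zero hC hx).2 h)⟩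

theorem IsProjOn.eq (hC : Convex ℝ C) {v : E} (hx : IsProjOn C w x) (hv : IsProjOn C w v) :
    x = v := by
  obtain ⟨hxC, hx⟩ := (isProjOn_iff_inner_le_zero hC).1 hx
  obtain ⟨hvC, hv⟩ := (isProjOn_iff_inner_le_zero hC).1 hv
  have hself : ⟪x - v, x - v⟫ ≤ 0 := by
    calc ⟪x - v, x - v⟫ = ⟪w - v, x - v⟫ + ⟪w - x, v - x⟫ := by
          rw [← neg_sub x v, inner_neg_right, ← sub_eq_add_neg, ← inner_sub_left,
            sub_sub_sub_cancel_left]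
      _ ≤ 0 := add_nonpos (hv x hxC) (hx v hvC)
  exact sub_eq_zero.1 (real_inner_self_nonpos.1 hself)

theorem existsUnique_isProjOn (hne : C.Nonempty) (hcomplete : IsComplete C) (hC : Convex ℝ C)
    (w : E) : ∃! x, IsProjOn C w x := by
  obtain ⟨x, hx, hmin⟩ := exists_norm_eq_iInf_of_complete_convex hne hcomplete hC w
  exact ⟨x, (isProjOn_iff_norm_eq_iInf hx).2 hmin, fun v hv => hv.eq hC
    ((isProjOn_iff_norm_eq_iInf hx).2 hmin)⟩

theorem setOf_vi_smul_sub_eq_setOf_isProjOn (hC : Convex ℝ C) {c : ℝ} (hc : 0 < c) (a : E) :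
    {x | x ∈ C ∧ ∀ z ∈ C, (0 : ℝ) ≤ ⟪c • (x - a), z - x⟫} = {x | IsProjOn C a x} := by
  ext x
  simp only [Set.mem_ofPred_eq, isProjOn_iff_inner_le_zero hC, real_inner_smul_left]
  refine and_congr_right fun _ => forall₂_congr fun z _ => ?_
  rw [← neg_sub x a, inner_neg_left, mul_nonneg_iff_of_pos_left hc, neg_nonpos]

end Projection

/-- the solution set of the variational inequality `VI(F(·; y), Ω)`, where
`F` is the pseudo-gradient of the game (`i`-th block `2(xᵢ − rᵢ) + Aᵢᵀ Πᵢᵀ (p + y)`),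
is a singleton: it equals `{proj_Ω(a(y))}`, where the `i`-th block of `a(y)` is
`rᵢ − (1/2) Aᵢᵀ Πᵢᵀ (p + y)` (an affine function of `y`). Blocks are encoded via the
sigma type `(i : Fin N) × Fin (n i)`, so that `ℝ^d` with `d = Σᵢ nᵢ` is
`EuclideanSpace ℝ ((i : Fin N) × Fin (n i))`. -/
theorem vi_solution_singleton (N T : ℕ) (n : Fin N → ℕ)
    (r : (i : Fin N) → Fin (n i) → ℝ)
    (A : (i : Fin N) → Matrix (Fin T) (Fin (n i)) ℝ)
    (Pi : (i : Fin N) → Matrix (Fin T) (Fin T) ℝ)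
    (p y : Fin T → ℝ)
    (Ω : Set (EuclideanSpace ℝ ((i : Fin N) × Fin (n i))))
    (hne : Ω.Nonempty) (hcl : IsClosed Ω) (hconv : Convex ℝ Ω)
    (F : EuclideanSpace ℝ ((i : Fin N) × Fin (n i)) →
      EuclideanSpace ℝ ((i : Fin N) × Fin (n i)))
    (hF : ∀ x ij, F x ij =
      2 * (x ij - r ij.1 ij.2) + (((A ij.1)ᵀ) *ᵥ (((Pi ij.1)ᵀ) *ᵥ (p + y))) ij.2)
    (a : EuclideanSpace ℝ ((i : Fin N) × Fin (n i)))
    (ha : ∀ ij, a ij =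
      r ij.1 ij.2 - (1 / 2) * (((A ij.1)ᵀ) *ᵥ (((Pi ij.1)ᵀ) *ᵥ (p + y))) ij.2) :
    ({x | x ∈ Ω ∧ ∀ z ∈ Ω, (0 : ℝ) ≤ ⟪F x, z - x⟫} = {x | IsProjOn Ω a x}) ∧
      (∃! x, IsProjOn Ω a x) := by
  have hFa : F = fun x => (2 : ℝ) • (x - a) := by
    funext x
    ext ij
    rw [hF, PiLp.smul_apply, PiLp.sub_apply, ha, smul_eq_mul]
    ring
  subst hFa
  exact ⟨setOf_vi_smul_sub_eq_setOf_isProjOn hconv two_pos a,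
    existsUnique_isProjOn hne hcl.isComplete hconv a⟩
end

section
/- Let T, d ∈ ℕ, L ≥ 0, ε ≥ 0, ρ > 0, and let J₀ : ℝ^T × ℝ^d → ℝ satisfy |J₀(y, x) − J₀(y, x′)| ≤ L‖x − x′‖ for all y ∈ ℝ^T and x, x′ ∈ ℝ^d (Lipschitz in the second argument, uniformly in the first). Let φ, φ̂ : ℝ^T → ℝ^d be maps with ‖φ(y) − φ̂(y)‖ ≤ ε for all y in the closed ball B(y_k, ρ) around a point y_k ∈ ℝ^T. Suppose ŷ* minimizes y ↦ J₀(y, φ̂(y)) over B(y_k, ρ). Then J₀(ŷ*, φ(ŷ*)) ≤ J₀(y_k, φ(y_k)) + 2 L ε. -/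
theorem IsMinOn.le_add_two_mul_of_abs_sub_le {α : Type*} {f g : α → ℝ} {s : Set α} {a b : α}
    {δ : ℝ} (hmin : IsMinOn g s a) (ha : a ∈ s) (hb : b ∈ s)
    (hfg : ∀ y ∈ s, |f y - g y| ≤ δ) : f a ≤ f b + 2 * δ := by
  have hfa := (abs_le.1 (hfg a ha)).2
  have hfb := (abs_le.1 (hfg b hb)).1
  have hab : g a ≤ g b := isMinOn_iff.1 hmin b hb
  linarith

theorem abs_sub_comp_le_mul_of_lipschitz {Y X : Type*} [SeminormedAddCommGroup X]
    {J : Y → X → ℝ} {L ε : ℝ} (hL : 0 ≤ L) (hJ : ∀ y x x', |J y x - J y x'| ≤ L * ‖x - x'‖)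
    {φ ψ : Y → X} {y : Y} (hy : ‖φ y - ψ y‖ ≤ ε) : |J y (φ y) - J y (ψ y)| ≤ L * ε :=
  (hJ y _ _).trans (mul_le_mul_of_nonneg_left hy hL)

theorem surrogate_minimizer_bound_general (T d : ℕ) (L ε ρ : ℝ)
    (hL : 0 ≤ L) (hρ : 0 < ρ)
    (J₀ : EuclideanSpace ℝ (Fin T) → EuclideanSpace ℝ (Fin d) → ℝ)
    (hJ₀ : ∀ (y : EuclideanSpace ℝ (Fin T)) (x x' : EuclideanSpace ℝ (Fin d)),
      |J₀ y x - J₀ y x'| ≤ L * ‖x - x'‖)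
    (φ φhat : EuclideanSpace ℝ (Fin T) → EuclideanSpace ℝ (Fin d))
    (yk : EuclideanSpace ℝ (Fin T))
    (hclose : ∀ y ∈ Metric.closedBall yk ρ, ‖φ y - φhat y‖ ≤ ε)
    (yhat : EuclideanSpace ℝ (Fin T))
    (hyhat_mem : yhat ∈ Metric.closedBall yk ρ)
    (hyhat_min : ∀ y ∈ Metric.closedBall yk ρ, J₀ yhat (φhat yhat) ≤ J₀ y (φhat y)) :
    J₀ yhat (φ yhat) ≤ J₀ yk (φ yk) + 2 * L * ε := by
  rw [mul_assoc]
  exact IsMinOn.le_add_two_mul_of_abs_sub_le (isMinOn_iff.2 hyhat_min) hyhat_mem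
    (Metric.mem_closedBall_self hρ.le)
    fun y hy => abs_sub_comp_le_mul_of_lipschitz hL hJ₀ (hclose y hy)

/-- if `J₀(y, ·)` is `L`-Lipschitz uniformly in `y`, `φ` and `φ̂` are
`ε`-close on the trust region `B(y_k, ρ)`, and `ŷ*` minimizes `y ↦ J₀(y, φ̂(y))` over
`B(y_k, ρ)`, then `J₀(ŷ*, φ(ŷ*)) ≤ J₀(y_k, φ(y_k)) + 2Lε`. -/
theorem surrogate_minimizer_bound (T d : ℕ) (L ε ρ : ℝ)
    (hL : 0 ≤ L) (hε : 0 ≤ ε) (hρ : 0 < ρ)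
    (J₀ : EuclideanSpace ℝ (Fin T) → EuclideanSpace ℝ (Fin d) → ℝ)
    (hJ₀ : ∀ (y : EuclideanSpace ℝ (Fin T)) (x x' : EuclideanSpace ℝ (Fin d)),
      |J₀ y x - J₀ y x'| ≤ L * ‖x - x'‖)
    (φ φhat : EuclideanSpace ℝ (Fin T) → EuclideanSpace ℝ (Fin d))
    (yk : EuclideanSpace ℝ (Fin T))
    (hclose : ∀ y ∈ Metric.closedBall yk ρ, ‖φ y - φhat y‖ ≤ ε)
    (yhat : EuclideanSpace ℝ (Fin T))
    (hyhat_mem : yhat ∈ Metric.closedBall yk ρ)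
    (hyhat_min : ∀ y ∈ Metric.closedBall yk ρ, J₀ yhat (φhat yhat) ≤ J₀ y (φhat y)) :
    J₀ yhat (φ yhat) ≤ J₀ yk (φ yk) + 2 * L * ε :=
  surrogate_minimizer_bound_general T d L ε ρ hL hρ J₀ hJ₀ φ φhat yk hclose yhat hyhat_mem hyhat_min
end

section
/- Let E be a finite-dimensional real inner product space, Z ⊆ E a nonempty set, g : E → ℝ any function, and p : E → ℝ a convex function that is differentiable at a point z_t ∈ Z. Suppose z_{t+1} ∈ Z minimizes the function z ↦ g(z) − ⟨∇p(z_t), z⟩ over Z. Then g(z_{t+1}) − p(z_{t+1}) ≤ g(z_t) − p(z_t), i.e., one iteration of the difference-of-convex (DCA) scheme does not increase the objective g − p. -/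
open scoped RealInnerProductSpace

open AffineMap

theorem ConvexOn.fderiv_apply_sub_le {E : Type*} [NormedAddCommGroup E] [NormedSpace ℝ E]
    {s : Set E} {f : E → ℝ} {f' : E →L[ℝ] ℝ} {x y : E} (hf : ConvexOn ℝ s f)
    (hx : x ∈ s) (hy : y ∈ s) (hf' : HasFDerivAt f f' x) :
    f' (y - x) ≤ f y - f x := by
  have hline : ConvexOn ℝ (Set.Icc 0 1) (f ∘ (lineMap x y : ℝ →ᵃ[ℝ] E)) :=
    (hf.comp_affineMap (lineMap x y)).subset (fun t ht => hf.1.lineMap_mem hx hy ht)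
      (convex_Icc 0 1)
  have hderiv : HasDerivAt (f ∘ (lineMap x y : ℝ →ᵃ[ℝ] E)) (f' (y - x)) 0 := by
    refine hf'.comp_hasDerivAt_of_eq 0 hasDerivAt_lineMap ?_
    simp
  simpa [slope_def_field] using
    hline.le_slope_of_hasDerivAt (by simp) (by simp) zero_lt_one hderiv

theorem ConvexOn.inner_gradient_sub_le {E : Type*} [NormedAddCommGroup E]
    [InnerProductSpace ℝ E] [CompleteSpace E] {s : Set E} {f : E → ℝ} {f' x y : E}
    (hf : ConvexOn ℝ s f) (hx : x ∈ s) (hy : y ∈ s) (hf' : HasGradientAt f f' x) :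
    ⟪f', y - x⟫ ≤ f y - f x := by
  simpa using hf.fderiv_apply_sub_le hx hy hf'.hasFDerivAt

theorem dca_step_monotone_general {E : Type*} [NormedAddCommGroup E] [InnerProductSpace ℝ E]
    [FiniteDimensional ℝ E]
    (Z : Set E) (g p : E → ℝ)
    (hp : ConvexOn ℝ Set.univ p)
    (zt : E) (hzt : zt ∈ Z) (gp : E) (hgrad : HasGradientAt p gp zt)
    (zt1 : E)
    (hmin : ∀ z ∈ Z, g zt1 - ⟪gp, zt1⟫ ≤ g z - ⟪gp, z⟫) :
    g zt1 - p zt1 ≤ g zt - p zt := by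
  have hstep := hmin zt hzt
  have htangent := hp.inner_gradient_sub_le (Set.mem_univ zt) (Set.mem_univ zt1) hgrad
  rw [inner_sub_right] at htangent
  linarith

/-- one iteration of the difference-of-convex (DCA) scheme does not
increase the objective `g − p`: if `p` is convex and differentiable at `z_t ∈ Z`
with gradient `gp`, and `z_{t+1} ∈ Z` minimizes `z ↦ g(z) − ⟨gp, z⟩` over `Z`,
then `g(z_{t+1}) − p(z_{t+1}) ≤ g(z_t) − p(z_t)`. -/
theorem dca_step_monotone {E : Type*} [NormedAddCommGroup E] [InnerProductSpace ℝ E]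
    [FiniteDimensional ℝ E]
    (Z : Set E) (hZ : Z.Nonempty) (g p : E → ℝ)
    (hp : ConvexOn ℝ Set.univ p)
    (zt : E) (hzt : zt ∈ Z) (gp : E) (hgrad : HasGradientAt p gp zt)
    (zt1 : E) (hzt1 : zt1 ∈ Z)
    (hmin : ∀ z ∈ Z, g zt1 - ⟪gp, zt1⟫ ≤ g z - ⟪gp, z⟫) :
    g zt1 - p zt1 ≤ g zt - p zt :=
  dca_step_monotone_general Z g p hp zt hzt gp hgrad zt1 hmin
end
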